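/- For coprime integers a, b with 1 ≤ a ≤ b, the following specialisations of P_{a/b} hold as polynomial identities: P_{a/b}(0, v, w) = v^b·(v+w)^{a−1}, P_{a/b}(u, 0, w) = u^a·(u+w)^{b−1}, and P_{a/b}(u, v, 0) = (u+v)^{a+b−1}. -/

import Mathlib

open MvPolynomial

/-- Specification of the Markov numerator polynomials `P a b` (for coprime `a ≤ b`),
defined by the base cases `P 0 1 = 1`, `P 1 1 = u + v`, `P 1 2 = (u+v)^2 + u*w`
and the Farey-parent recursion
`P (a/b) = (u+v+w) * P (p1/q1) * P (p2/q2) - u^p1 * v^q1 * w^(p1+q1) * P ((p2-p1)/(q2-q1))`,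
where `p1/q1` and `p2/q2` are the Farey parents of `a/b`, ordered so that `q1 < q2`.
Here the variables are `u = X 0`, `v = X 1`, `w = X 2`. -/
structure MarkovNumerator (P : ℕ → ℕ → MvPolynomial (Fin 3) ℤ) : Prop where
  base01 : P 0 1 = 1
  base11 : P 1 1 = X 0 + X 1
  base12 : P 1 2 = (X 0 + X 1) ^ 2 + X 0 * X 2
  farey : ∀ a b p1 q1 p2 q2 : ℕ, 1 ≤ a → a < b → 3 ≤ b → Nat.Coprime a b →
    p1 + p2 = a → q1 + q2 = b → q1 < q2 →
    ((p1 : ℤ) * q2 - (p2 : ℤ) * q1 = 1 ∨ (p2 : ℤ) * q1 - (p1 : ℤ) * q2 = 1) →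
    P a b = (X 0 + X 1 + X 2) * P p1 q1 * P p2 q2
      - X 0 ^ p1 * X 1 ^ q1 * X 2 ^ (p1 + q1) * P (p2 - p1) (q2 - q1)



def Sp (Q : MvPolynomial (Fin 3) ℤ) (a b : ℕ) : Prop :=
  aeval ![(0 : MvPolynomial (Fin 3) ℤ), X 1, X 2] Q =
      (if a = 0 then 1 else X 1 ^ b * (X 1 + X 2) ^ (a - 1)) ∧
  aeval ![X 0, (0 : MvPolynomial (Fin 3) ℤ), X 2] Q = X 0 ^ a * (X 0 + X 2) ^ (b - 1) ∧
  aeval ![X 0, X 1, (0 : MvPolynomial (Fin 3) ℤ)] Q = (X 0 + X 1) ^ (a + b - 1)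

lemma step (P : ℕ → ℕ → MvPolynomial (Fin 3) ℤ)
    (a b p1 q1 p2 q2 : ℕ)
    (hp : p1 + p2 = a) (hq : q1 + q2 = b)
    (hq1 : 1 ≤ q1) (hq12 : q1 < q2)
    (hp2 : 1 ≤ p2)
    (hdet0 : p1 = 0 → p2 = 1 ∧ q1 = 1)
    (hrec : P a b = (X 0 + X 1 + X 2) * P p1 q1 * P p2 q2
      - X 0 ^ p1 * X 1 ^ q1 * X 2 ^ (p1 + q1) * P (p2 - p1) (q2 - q1))
    (h1 : Sp (P p1 q1) p1 q1) (h2 : Sp (P p2 q2) p2 q2)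
    (h3 : Sp (P (p2 - p1) (q2 - q1)) (p2 - p1) (q2 - q1)) :
    Sp (P a b) a b := by
  obtain ⟨h11, h12, h13⟩ := h1
  obtain ⟨h21, h22, h23⟩ := h2
  obtain ⟨h31, h32, h33⟩ := h3
  refine ⟨?_, ?_, ?_⟩
  · -- u = 0
    rw [hrec]
    simp only [map_sub, map_mul, map_pow, map_add, aeval_X, Matrix.cons_val_zero,
      Matrix.cons_val_one, Matrix.head_cons, Matrix.cons_val_two, Matrix.tail_cons,
      h11, h21]
    by_cases hp1 : p1 = 0
    · obtain ⟨hp2e, hq1e⟩ := hdet0 hp1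
      subst hp1 hp2e hq1e
      obtain ⟨m, rfl⟩ : ∃ m, q2 = m + 1 := ⟨q2 - 1, by omega⟩
      have ha : a = 1 := by omega
      have hb : b = m + 2 := by omega
      subst ha hb
      norm_num at h31 ⊢
      rw [h31]
      ring
    · have hp1' : 1 ≤ p1 := by omega
      rw [if_neg hp1, if_neg (by omega : p2 ≠ 0),
        if_neg (by omega : a ≠ 0), zero_pow hp1]
      have e1 : b = q1 + q2 := hq.symm
      have e2 : a - 1 = (p1 - 1) + (p2 - 1) + 1 := by omega
      rw [e1, e2]
      ring
  · -- v = 0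
    rw [hrec]
    simp only [map_sub, map_mul, map_pow, map_add, aeval_X, Matrix.cons_val_zero,
      Matrix.cons_val_one, Matrix.head_cons, Matrix.cons_val_two, Matrix.tail_cons,
      h12, h22]
    rw [zero_pow (by omega : q1 ≠ 0)]
    have e1 : a = p1 + p2 := hp.symm
    have e2 : b - 1 = (q1 - 1) + (q2 - 1) + 1 := by omega
    rw [e1, e2]
    ring
  · -- w = 0
    rw [hrec]
    simp only [map_sub, map_mul, map_pow, map_add, aeval_X, Matrix.cons_val_zero,
      Matrix.cons_val_one, Matrix.head_cons, Matrix.cons_val_two, Matrix.tail_cons,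
      h13, h23]
    rw [zero_pow (by omega : p1 + q1 ≠ 0)]
    have e2 : a + b - 1 = (p1 + q1 - 1) + (p2 + q2 - 1) + 1 := by omega
    rw [e2]
    ring

lemma farey_parents (a b : ℕ) (ha1 : 1 ≤ a) (hablt : a < b) (hb3 : 3 ≤ b)
    (hcop : Nat.Coprime a b) :
    ∃ p1 q1 p2 q2 : ℕ,
      p1 + p2 = a ∧ q1 + q2 = b ∧ 1 ≤ q1 ∧ q1 < q2 ∧ 1 ≤ p2 ∧
      (p1 = 0 → p2 = 1 ∧ q1 = 1) ∧
      ((p1 : ℤ) * q2 - (p2 : ℤ) * q1 = 1 ∨ (p2 : ℤ) * q1 - (p1 : ℤ) * q2 = 1) ∧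
      p1 ≤ q1 ∧ p2 ≤ q2 ∧ p2 - p1 ≤ q2 - q1 ∧
      Nat.Coprime p1 q1 ∧ Nat.Coprime p2 q2 ∧ Nat.Coprime (p2 - p1) (q2 - q1) := by
  have hb0 : 0 < b := by omega
  obtain ⟨n, hnb, k, hk⟩ : ∃ n, n < b ∧ ∃ k, b * k + 1 = a * n := by
    obtain ⟨n0, -, hn0⟩ := Nat.exists_mul_mod_eq_one_of_coprime hcop (by omega)
    have hn : a * (n0 % b) % b = 1 := by
      rw [Nat.mul_mod, Nat.mod_mod_of_dvd _ dvd_rfl, ← Nat.mul_mod, hn0]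
    exact ⟨n0 % b, Nat.mod_lt _ hb0, a * (n0 % b) / b,
      by rw [← hn]; exact Nat.div_add_mod (a * (n0 % b)) b⟩
  have hn1 : 1 ≤ n := by
    rcases Nat.eq_zero_or_pos n with h | h
    · rw [h, Nat.mul_zero] at hk; omega
    · exact h
  have hZ : (a:ℤ) * n = (b:ℤ) * k + 1 := by exact_mod_cast hk.symm
  have hnbZ : (n:ℤ) < b := by exact_mod_cast hnb
  have hn1Z : 1 ≤ (n:ℤ) := by exact_mod_cast hn1
  have habZ : (a:ℤ) < b := by exact_mod_cast hablt
  have hb3Z : 3 ≤ (b:ℤ) := by exact_mod_cast hb3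
  have ha1Z : 1 ≤ (a:ℤ) := by exact_mod_cast ha1
  have hknZ : (k:ℤ) < n := by
    by_contra hcon
    push_neg at hcon
    have hsum : (0:ℤ) ≤ -1 - n := by
      have t1 : (0:ℤ) ≤ ((k:ℤ) - n) * b := mul_nonneg (by linarith) (by linarith)
      have t2 : (0:ℤ) ≤ ((b:ℤ) - 1 - a) * n := mul_nonneg (by linarith) (by linarith)
      calc (0:ℤ) ≤ ((k:ℤ) - n) * b + ((b:ℤ) - 1 - a) * n := by linarith
      _ = -1 - n := by linear_combination -hZ
    linarith
  have hkaZ : (k:ℤ) < a := by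
    by_contra hcon
    push_neg at hcon
    have hsum : (0:ℤ) ≤ -1 := by
      have t1 : (0:ℤ) ≤ ((k:ℤ) - a) * b := mul_nonneg (by linarith) (by linarith)
      have t2 : (0:ℤ) ≤ ((b:ℤ) - n) * a := mul_nonneg (by linarith) (by linarith)
      calc (0:ℤ) ≤ ((k:ℤ) - a) * b + ((b:ℤ) - n) * a := by linarith
      _ = -1 := by linear_combination -hZ
    linarith
  have hkn : k < n := by exact_mod_cast hknZ
  have hka : k < a := by exact_mod_cast hkaZ
  have goal1 : a + n ≤ b + k := by
    by_contra hcon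
    push_neg at hcon
    have h1 : (b:ℤ) + k + 1 ≤ (a:ℤ) + n := by exact_mod_cast hcon
    have hsum : (0:ℤ) ≤ (k:ℤ) + 2 - n - b := by
      have t1 : (0:ℤ) ≤ ((a:ℤ) + n - b - k - 1) * n := mul_nonneg (by linarith) (by linarith)
      have t2 : (0:ℤ) ≤ ((b:ℤ) - n - 1) * ((n:ℤ) - k - 1) := mul_nonneg (by linarith) (by linarith)
      calc (0:ℤ) ≤ ((a:ℤ) + n - b - k - 1) * n + ((b:ℤ) - n - 1) * ((n:ℤ) - k - 1) := by linarith
      _ = (k:ℤ) + 2 - n - b := by linear_combination hZ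
    linarith
  have goal1Z : (a:ℤ) + n ≤ (b:ℤ) + k := by exact_mod_cast goal1
  rcases lt_trichotomy (2 * n) b with hcase | hcase | hcase
  · -- case A
    have h2nZ : 2 * (n:ℤ) < b := by exact_mod_cast hcase
    have ha2k : 2 * k < a := by
      by_contra hcon
      push_neg at hcon
      have h1 : (a:ℤ) ≤ 2 * k := by exact_mod_cast hcon
      have hsum : (0:ℤ) ≤ -1 := by
        have t1 : (0:ℤ) ≤ (k:ℤ) * ((b:ℤ) - 2*n) := mul_nonneg (by positivity) (by linarith)
        have t2 : (0:ℤ) ≤ (2*(k:ℤ) - a) * n := mul_nonneg (by linarith) (by positivity)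
        calc (0:ℤ) ≤ (k:ℤ) * ((b:ℤ) - 2*n) + (2*(k:ℤ) - a) * n := by linarith
        _ = -1 := by linear_combination -hZ
      linarith
    have diffA : a + 2 * n ≤ b + 2 * k := by
      by_contra hcon
      push_neg at hcon
      have h1 : (b:ℤ) + 2*k + 1 ≤ (a:ℤ) + 2*n := by exact_mod_cast hcon
      have hsum : (0:ℤ) ≤ (k:ℤ) - b + 2 := by
        have t1 : (0:ℤ) ≤ ((a:ℤ) - b - 2*k + 2*n - 1) * n := mul_nonneg (by linarith) (by positivity)
        have t2 : (0:ℤ) ≤ ((b:ℤ) - 2*n - 1) * ((n:ℤ) - k - 1) := mul_nonneg (by linarith) (by linarith)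
        calc (0:ℤ) ≤ ((a:ℤ) - b - 2*k + 2*n - 1) * n + ((b:ℤ) - 2*n - 1) * ((n:ℤ) - k - 1) := by linarith
        _ = (k:ℤ) - b + 2 := by linear_combination hZ
      linarith
    refine ⟨k, n, a - k, b - n, by omega, by omega, hn1, by omega, by omega, ?_, ?_, by omega, by omega, by omega, ?_, ?_, ?_⟩
    · intro hk0
      subst hk0
      have h1 : a * n = 1 := by omega
      have ha' := Nat.eq_one_of_mul_eq_one_right h1
      have hn' := Nat.eq_one_of_mul_eq_one_left h1
      omega
    · right
      push_cast [Nat.cast_sub hka.le, Nat.cast_sub hnb.le]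
      linear_combination hZ
    · exact Nat.isCoprime_iff_coprime.mp ⟨-((b:ℤ) - n), (a:ℤ) - k, by linear_combination hZ⟩
    · refine Nat.isCoprime_iff_coprime.mp ⟨(n:ℤ), -(k:ℤ), ?_⟩
      push_cast [Nat.cast_sub hka.le, Nat.cast_sub hnb.le]
      linear_combination hZ
    · refine Nat.isCoprime_iff_coprime.mp ⟨(n:ℤ), -(k:ℤ), ?_⟩
      have e1 : a - k - k = a - 2 * k := by omega
      have e2 : b - n - n = b - 2 * n := by omega
      rw [e1, e2]
      push_cast [Nat.cast_sub (by omega : 2 * k ≤ a), Nat.cast_sub (by omega : 2 * n ≤ b)]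
      linear_combination hZ
  · -- 2n = b impossible
    exfalso
    have hcaseZ : 2 * (n:ℤ) = (b:ℤ) := by exact_mod_cast hcase
    have h2 : (b:ℤ) ∣ 2 := ⟨(a:ℤ) - 2 * k, by linear_combination (-2) * hZ + (a:ℤ) * hcaseZ⟩
    have := Int.le_of_dvd (by norm_num) h2
    omega
  · -- case B
    have h2nZ : (b:ℤ) < 2 * n := by exact_mod_cast hcase
    have hkB : 1 ≤ k := by
      rcases Nat.eq_zero_or_pos k with h | h
      · exfalso
        rw [h, Nat.mul_zero] at hk
        have h1 : a * n = 1 := by omega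
        have hn' := Nat.eq_one_of_mul_eq_one_left h1
        omega
      · exact h
    have hkBZ : 1 ≤ (k:ℤ) := by exact_mod_cast hkB
    have h2nZ' : (b:ℤ) < 2 * n := h2nZ
    have ha2k : a ≤ 2 * k := by
      by_contra hcon
      push_neg at hcon
      have h1 : 2 * (k:ℤ) + 1 ≤ a := by exact_mod_cast hcon
      have hsum : (0:ℤ) ≤ 1 - (k:ℤ) - n := by
        have t1 : (0:ℤ) ≤ (k:ℤ) * (2*(n:ℤ) - b - 1) := mul_nonneg (by positivity) (by linarith)
        have t2 : (0:ℤ) ≤ ((a:ℤ) - 2*k - 1) * n := mul_nonneg (by linarith) (by positivity)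
        calc (0:ℤ) ≤ (k:ℤ) * (2*(n:ℤ) - b - 1) + ((a:ℤ) - 2*k - 1) * n := by linarith
        _ = 1 - (k:ℤ) - n := by linear_combination hZ
      linarith
    have diffB : 2 * k + b ≤ a + 2 * n := by
      by_contra hcon
      push_neg at hcon
      have h1 : (a:ℤ) + 2*n + 1 ≤ 2*(k:ℤ) + b := by exact_mod_cast hcon
      have hsum : (0:ℤ) ≤ (n:ℤ) - b - 1 := by
        have t1 : (0:ℤ) ≤ (((b:ℤ) - n) - ((a:ℤ) - k)) * (2*(n:ℤ) - b) := mul_nonneg (by linarith) (by linarith)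
        have t2 : (0:ℤ) ≤ ((2*(k:ℤ) - a) - (2*(n:ℤ) - b + 1)) * ((b:ℤ) - n) := mul_nonneg (by linarith) (by linarith)
        calc (0:ℤ) ≤ (((b:ℤ) - n) - ((a:ℤ) - k)) * (2*(n:ℤ) - b) + ((2*(k:ℤ) - a) - (2*(n:ℤ) - b + 1)) * ((b:ℤ) - n) := by linarith
        _ = (n:ℤ) - b - 1 := by linear_combination -hZ
      linarith
    refine ⟨a - k, b - n, k, n, by omega, by omega, by omega, by omega, hkB, by omega, ?_, by omega, by omega, by omega, ?_, ?_, ?_⟩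
    · left
      push_cast [Nat.cast_sub hka.le, Nat.cast_sub hnb.le]
      linear_combination hZ
    · refine Nat.isCoprime_iff_coprime.mp ⟨(n:ℤ), -(k:ℤ), ?_⟩
      push_cast [Nat.cast_sub hka.le, Nat.cast_sub hnb.le]
      linear_combination hZ
    · exact Nat.isCoprime_iff_coprime.mp ⟨-((b:ℤ) - n), (a:ℤ) - k, by linear_combination hZ⟩
    · refine Nat.isCoprime_iff_coprime.mp ⟨-((b:ℤ) - n), (a:ℤ) - k, ?_⟩
      have e1 : k - (a - k) = 2 * k - a := by omega
      have e2 : n - (b - n) = 2 * n - b := by omega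
      rw [e1, e2]
      push_cast [Nat.cast_sub ha2k, Nat.cast_sub (by omega : b ≤ 2 * n)]
      linear_combination hZ

lemma key (P : ℕ → ℕ → MvPolynomial (Fin 3) ℤ) (hP : MarkovNumerator P) :
    ∀ b a : ℕ, a ≤ b → Nat.Coprime a b → Sp (P a b) a b := by
  intro b
  induction b using Nat.strong_induction_on with
  | _ b IH =>
  intro a hab hcop
  by_cases hb3 : b < 3
  · interval_cases b
    · interval_cases a
      · exact absurd hcop (by simp [Nat.Coprime])
    · interval_cases a
      · refine ⟨?_, ?_, ?_⟩ <;> simp [Sp, hP.base01]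
      · refine ⟨?_, ?_, ?_⟩ <;>
          simp [Sp, hP.base11, Matrix.cons_val_zero, Matrix.cons_val_one, Matrix.head_cons]
    · interval_cases a
      · exact absurd hcop (by simp [Nat.Coprime])
      · refine ⟨?_, ?_, ?_⟩ <;>
          · simp [Sp, hP.base12, Matrix.cons_val_zero, Matrix.cons_val_one, Matrix.head_cons,
              Matrix.cons_val_two, Matrix.tail_cons]
            try ring
      · exact absurd hcop (by simp [Nat.Coprime])
  · push_neg at hb3
    have ha0 : a ≠ 0 := by
      rintro rfl
      rw [Nat.coprime_zero_left] at hcop; omega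
    have hablt : a < b := by
      rcases lt_or_eq_of_le hab with h | h
      · exact h
      · subst h
        have h1 : a = 1 := by simpa [Nat.Coprime, Nat.gcd_self] using hcop
        omega
    have ha1 : 1 ≤ a := by omega
    obtain ⟨p1, q1, p2, q2, hp, hq, hq1, hq12, hp2, hdet0, hdet, hpq1, hpq2, hdd,
      cop1, cop2, cop3⟩ := farey_parents a b ha1 hablt hb3 hcop
    have hrec := hP.farey a b p1 q1 p2 q2 ha1 hablt hb3 hcop hp hq hq12 hdet
    have h1 := IH q1 (by omega) p1 hpq1 cop1
    have h2 := IH q2 (by omega) p2 hpq2 cop2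
    have h3 := IH (q2 - q1) (by omega) (p2 - p1) hdd cop3
    exact step P a b p1 q1 p2 q2 hp hq hq1 hq12 hp2 hdet0 hrec h1 h2 h3

/-- The specialisations of `P_{a/b}` at `u = 0`, `v = 0` and `w = 0` respectively:
`P_{a/b}(0,v,w) = v^b (v+w)^(a-1)`, `P_{a/b}(u,0,w) = u^a (u+w)^(b-1)`, and
`P_{a/b}(u,v,0) = (u+v)^(a+b-1)`, as polynomial identities. -/
theorem markov_numerator_specialisations (P : ℕ → ℕ → MvPolynomial (Fin 3) ℤ)
    (hP : MarkovNumerator P) (a b : ℕ) (ha : 1 ≤ a) (hab : a ≤ b)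
    (hcop : Nat.Coprime a b) :
    aeval ![(0 : MvPolynomial (Fin 3) ℤ), X 1, X 2] (P a b) = X 1 ^ b * (X 1 + X 2) ^ (a - 1) ∧
    aeval ![X 0, (0 : MvPolynomial (Fin 3) ℤ), X 2] (P a b) = X 0 ^ a * (X 0 + X 2) ^ (b - 1) ∧
    aeval ![X 0, X 1, (0 : MvPolynomial (Fin 3) ℤ)] (P a b) = (X 0 + X 1) ^ (a + b - 1) := by
  obtain ⟨s1, s2, s3⟩ := key P hP b a hab hcop
  rw [if_neg (by omega : a ≠ 0)] at s1
  exact ⟨s1, s2, s3⟩
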